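/- arXiv:2502.20932 — 3 statements merged into one kernel-verified Lean document; each statement's English description precedes it below -/
import Mathlib

section
/- Let d ≥ 1, let J be a d×d real matrix, and fix integers j, ℓ ≥ 0. For c ∈ ℝ^d, c_{d+1} ∈ ℝ and r > 0, define the anisotropic ball B((c,c_{d+1}), r) = { (y, y_{d+1}) ∈ ℝ^d × ℝ : |c - y| < r/2^{j+ℓ} and |c_{d+1} - y_{d+1} + ⟨J c, y⟩| < r²/2^{j+ℓ} }. If 0 < s ≤ r and B((x,x_{d+1}), r) ∩ B((y,y_{d+1}), s) ≠ ∅, then B((y,y_{d+1}), s) ⊆ B((x,x_{d+1}), 3r). -/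
open MeasureTheory

noncomputable def aniBall (d : ℕ) (J : EuclideanSpace ℝ (Fin d) →L[ℝ] EuclideanSpace ℝ (Fin d))
    (j l : ℕ) (c : EuclideanSpace ℝ (Fin d) × ℝ) (r : ℝ) :
    Set (EuclideanSpace ℝ (Fin d) × ℝ) :=
  {y | ‖c.1 - y.1‖ < r / 2 ^ (j + l) ∧
    |c.2 - y.2 + (inner ℝ (J c.1) y.1 : ℝ)| < r ^ 2 / 2 ^ (j + l)}

/-!
The vertical gauge `c.2 - y.2 + ⟪J c.1, y.1⟫` changes centre from `x` to `y` up to the bilinear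
error `⟪J (x.1 - y.1), u.1 - z.1⟫`, whose size is at most the product of two horizontal distances
when `‖J‖ ≤ 1`. Routing through a common point `z` of the two balls, the horizontal distances are
`O(r/ρ)`, so this error is `O(r²/ρ²) ≤ O(r²/ρ)` once `ρ ≥ 1`, and it fits into the enlarged ball.
-/

namespace TwistedBall

variable {E : Type*} [NormedAddCommGroup E] [InnerProductSpace ℝ E]

def height (J : E →L[ℝ] E) (c y : E × ℝ) : ℝ :=
  c.2 - y.2 + inner ℝ (J c.1) y.1

/-- `aniBall` is the case `E = ℝ^d`, `ρ = 2 ^ (j + l)`. -/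
def twistedBall (J : E →L[ℝ] E) (ρ : ℝ) (c : E × ℝ) (r : ℝ) : Set (E × ℝ) :=
  {y | ‖c.1 - y.1‖ < r / ρ ∧ |height J c y| < r ^ 2 / ρ}

theorem height_eq_add_inner (J : E →L[ℝ] E) (x y z u : E × ℝ) :
    height J x u = height J x z - height J y z + height J y u
      + inner ℝ (J (x.1 - y.1)) (u.1 - z.1) := by
  simp only [height, map_sub, inner_sub_left, inner_sub_right]
  ring

theorem abs_inner_apply_le {J : E →L[ℝ] E} (hJ : ‖J‖ ≤ 1) (v w : E) :
    |inner ℝ (J v) w| ≤ ‖v‖ * ‖w‖ :=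
  (abs_real_inner_le_norm _ _).trans <| by
    gcongr
    exact J.le_of_opNorm_le hJ v |>.trans_eq (one_mul _)

theorem abs_height_le {J : E →L[ℝ] E} (hJ : ‖J‖ ≤ 1) (x y z u : E × ℝ) :
    |height J x u| ≤ |height J x z| + |height J y z| + |height J y u|
      + ‖x.1 - y.1‖ * ‖u.1 - z.1‖ := by
  rw [height_eq_add_inner J x y z u]
  have := abs_inner_apply_le hJ (x.1 - y.1) (u.1 - z.1)
  have := abs_sub (height J x z) (height J y z)
  have := abs_add_three (height J x z - height J y z) (height J y u)
    (inner ℝ (J (x.1 - y.1)) (u.1 - z.1))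
  linarith

theorem radius_pos_of_mem {J : E →L[ℝ] E} {ρ r : ℝ} {c p : E × ℝ} (hρ : 0 < ρ)
    (hp : p ∈ twistedBall J ρ c r) : 0 < r :=
  (div_pos_iff_of_pos_right hρ).mp <| (norm_nonneg _).trans_lt hp.1

theorem subset_three_mul_of_nonempty_inter {J : E →L[ℝ] E} (hJ : ‖J‖ ≤ 1) {ρ r s : ℝ}
    (hρ : 1 ≤ ρ) {x y : E × ℝ} (hsr : s ≤ r)
    (hne : (twistedBall J ρ x r ∩ twistedBall J ρ y s).Nonempty) :
    twistedBall J ρ y s ⊆ twistedBall J ρ x (3 * r) := by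
  obtain ⟨z, ⟨hxz, hxz'⟩, hyz, hyz'⟩ := hne
  rintro u ⟨hyu, hyu'⟩
  have hρ₀ : 0 < ρ := one_pos.trans_le hρ
  have hs : 0 < s := radius_pos_of_mem hρ₀ ⟨hyz, hyz'⟩
  have hxy : ‖x.1 - y.1‖ < r / ρ + s / ρ := by
    have := norm_sub_le_norm_sub_add_norm_sub x.1 z.1 y.1
    rw [norm_sub_rev z.1] at this
    linarith
  have huz : ‖u.1 - z.1‖ < s / ρ + s / ρ := by
    have := norm_sub_le_norm_sub_add_norm_sub u.1 y.1 z.1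
    rw [norm_sub_rev u.1 y.1] at this
    linarith
  constructor
  · calc ‖x.1 - u.1‖ ≤ ‖x.1 - y.1‖ + ‖y.1 - u.1‖ := norm_sub_le_norm_sub_add_norm_sub _ _ _
      _ < r / ρ + s / ρ + s / ρ := by linarith
      _ ≤ 3 * r / ρ := by rw [← add_div, ← add_div]; gcongr; linarith
  · have hprod : ‖x.1 - y.1‖ * ‖u.1 - z.1‖ < (r / ρ + s / ρ) * (s / ρ + s / ρ) :=
      mul_lt_mul'' hxy huz (norm_nonneg _) (norm_nonneg _)
    calc |height J x u|
        ≤ |height J x z| + |height J y z| + |height J y u| + ‖x.1 - y.1‖ * ‖u.1 - z.1‖ :=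
          abs_height_le hJ x y z u
      _ < r ^ 2 / ρ + s ^ 2 / ρ + s ^ 2 / ρ + (r / ρ + s / ρ) * (s / ρ + s / ρ) := by
          linarith
      _ = (r ^ 2 + 2 * s ^ 2 + (r + s) * (2 * s) / ρ) / ρ := by field_simp; ring
      _ ≤ (3 * r) ^ 2 / ρ := by
          have hcross : (r + s) * (2 * s) / ρ ≤ 4 * r ^ 2 :=
            (div_le_self (by nlinarith) hρ).trans (by nlinarith)
          gcongr
          nlinarith

end TwistedBall

open TwistedBall in
theorem stmt0_general (d : ℕ)
    (J : EuclideanSpace ℝ (Fin d) →L[ℝ] EuclideanSpace ℝ (Fin d)) (hJ : ‖J‖ ≤ 1)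
    (j l : ℕ) (x y : EuclideanSpace ℝ (Fin d) × ℝ) (r s : ℝ)
    (hsr : s ≤ r)
    (hne : (aniBall d J j l x r ∩ aniBall d J j l y s).Nonempty) :
    aniBall d J j l y s ⊆ aniBall d J j l x (3 * r) :=
  subset_three_mul_of_nonempty_inter hJ (one_le_pow₀ one_le_two) hsr hne

theorem stmt0 (d : ℕ) (hd : 1 ≤ d)
    (J : EuclideanSpace ℝ (Fin d) →L[ℝ] EuclideanSpace ℝ (Fin d)) (hJ : ‖J‖ ≤ 1)
    (j l : ℕ) (x y : EuclideanSpace ℝ (Fin d) × ℝ) (r s : ℝ)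
    (hs : 0 < s) (hsr : s ≤ r)
    (hne : (aniBall d J j l x r ∩ aniBall d J j l y s).Nonempty) :
    aniBall d J j l y s ⊆ aniBall d J j l x (3 * r) :=
  stmt0_general d J hJ j l x y r s hsr hne
end

section
/- Let d ≥ 1, let J be a d×d real matrix with operator norm at most 1, and fix integers j, ℓ ≥ 0. Define the anisotropic balls B(c̄, r) as above. Let S ⊆ ℝ^{d+1} be measurable with S ⊆ ⋃_{i=1}^n B(x̄_i, r_i) for finitely many centers x̄_i and radii r_i > 0. Then there is a pairwise disjoint subcollection B_{i_1}, …, B_{i_m} of these balls such that ∑_{k=1}^m |B_{i_k}| ≥ 3^{-(d+2)} |S|. -/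
open MeasureTheory
open scoped ENNReal

open Filter Topology Metric

/-!
The balls are engulfing: if `B(a, s)` meets `B(b, r)` with `s ≤ r`, then `B(a, s) ⊆ B(b, 3r)`.
Horizontally this is the triangle inequality; vertically, the defect
`b₂ - x₂ + ⟪J b₁, x₁⟫` splits through any common point `z` into three defects bounded by
`r² / 2^(j+ℓ)` plus the cross term `⟪J (b₁ - a₁), x₁ - z₁⟫`, which `‖J‖ ≤ 1` bounds by
`4 r² / 2^(2(j+ℓ))`. Tripling the radius multiplies the measure by `3^d` horizontally and by `9`
vertically. Vitali's selection lemma, run with a slack `τ > 1` so small that `r a ≤ τ * r b`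
already forces `r a ≤ r b` (possible because the family is finite), gives a disjoint subfamily
whose tripled balls cover `S`.
-/

theorem sub_add_inner_split {E : Type*} [NormedAddCommGroup E] [InnerProductSpace ℝ E]
    (J : E →L[ℝ] E) (a b x z : E × ℝ) :
    b.2 - x.2 + inner ℝ (J b.1) x.1 =
      (b.2 - z.2 + inner ℝ (J b.1) z.1) - (a.2 - z.2 + inner ℝ (J a.1) z.1) +
        (a.2 - x.2 + inner ℝ (J a.1) x.1) + inner ℝ (J (b.1 - a.1)) (x.1 - z.1) := by
  simp only [map_sub, inner_sub_left, inner_sub_right]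
  ring

theorem exists_one_lt_forall_le_mul_imp_le {ι : Type*} [Finite ι] (r : ι → ℝ) :
    ∃ τ : ℝ, 1 < τ ∧ ∀ a b, r a ≤ τ * r b → r a ≤ r b := by
  have hev : ∀ᶠ τ in 𝓝[>] (1 : ℝ), 1 < τ ∧ ∀ a b, r b < r a → τ * r b < r a := by
    refine eventually_mem_nhdsWithin.and
      (eventually_all.2 fun a => eventually_all.2 fun b => ?_)
    by_cases hba : r b < r a
    · have : ∀ᶠ τ in 𝓝 (1 : ℝ), τ * r b < r a :=
        (continuous_mul_const (r b)).continuousAt.eventually_lt continuousAt_const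
          (by simpa using hba)
      exact (this.filter_mono nhdsWithin_le_nhds).mono fun τ hτ _ => hτ
    · exact Eventually.of_forall fun τ h => absurd h hba
  obtain ⟨τ, hτ1, hτ⟩ := hev.exists
  exact ⟨τ, hτ1, fun a b hab => not_lt.1 fun hba => (hτ a b hba).not_ge hab⟩

theorem exists_pairwiseDisjoint_subfamily_of_engulfing {ι α : Type*} [Finite ι]
    (B B' : ι → Set α) (r : ι → ℝ) (hr : ∀ i, 0 ≤ r i) (hne : ∀ i, (B i).Nonempty)
    (hengulf : ∀ a b, r a ≤ r b → (B a ∩ B b).Nonempty → B a ⊆ B' b) :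
    ∃ t : Finset ι, (t : Set ι).PairwiseDisjoint B ∧ ⋃ i, B i ⊆ ⋃ i ∈ t, B' i := by
  obtain ⟨τ, hτ1, hτ⟩ := exists_one_lt_forall_le_mul_imp_le r
  obtain ⟨R, hR⟩ := (Set.finite_range r).bddAbove
  obtain ⟨u, -, hdisj, hcover⟩ := Vitali.exists_disjoint_subfamily_covering_enlargement B
    Set.univ r τ hτ1 (fun a _ => hr a) R (fun a _ => hR ⟨a, rfl⟩) (fun a _ => hne a)
  refine ⟨u.toFinite.toFinset, by simpa using hdisj, Set.iUnion_subset fun a => ?_⟩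
  obtain ⟨b, hb, hab, hrab⟩ := hcover a (Set.mem_univ a)
  exact (hengulf a b (hτ a b hrab) hab).trans
    (Set.subset_biUnion_of_mem (u := B') (by simpa using hb))

namespace aniBall

variable {d : ℕ} {J : EuclideanSpace ℝ (Fin d) →L[ℝ] EuclideanSpace ℝ (Fin d)} {j l : ℕ}

theorem mem_iff {c y : EuclideanSpace ℝ (Fin d) × ℝ} {r : ℝ} :
    y ∈ aniBall d J j l c r ↔ y.1 ∈ ball c.1 (r / 2 ^ (j + l)) ∧
      y.2 ∈ ball (c.2 + inner ℝ (J c.1) y.1) (r ^ 2 / 2 ^ (j + l)) := by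
  rw [mem_ball, mem_ball, dist_comm, dist_eq_norm, Real.dist_eq]
  refine and_congr_right' ?_
  rw [abs_sub_comm, add_sub_right_comm]

theorem isOpen (c : EuclideanSpace ℝ (Fin d) × ℝ) (r : ℝ) : IsOpen (aniBall d J j l c r) := by
  simp only [aniBall, Set.ofPred_and]
  exact (isOpen_lt (by fun_prop) continuous_const).inter
    (isOpen_lt (by fun_prop) continuous_const)

theorem nonempty (c : EuclideanSpace ℝ (Fin d) × ℝ) {r : ℝ} (hr : 0 < r) :
    (aniBall d J j l c r).Nonempty :=
  ⟨(c.1, c.2 + inner ℝ (J c.1) c.1), mem_iff.2 ⟨mem_ball_self (by positivity),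
    mem_ball_self (by positivity)⟩⟩

theorem volume_eq (c : EuclideanSpace ℝ (Fin d) × ℝ) (r : ℝ) :
    volume (aniBall d J j l c r) =
      ENNReal.ofReal (2 * (r ^ 2 / 2 ^ (j + l))) * volume (ball c.1 (r / 2 ^ (j + l))) := by
  have hfiber : ∀ x, volume (Prod.mk x ⁻¹' aniBall d J j l c r) =
      (ball c.1 (r / 2 ^ (j + l))).indicator
        (fun _ => ENNReal.ofReal (2 * (r ^ 2 / 2 ^ (j + l)))) x := by
    intro x
    by_cases hx : x ∈ ball c.1 (r / 2 ^ (j + l))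
    · have : Prod.mk x ⁻¹' aniBall d J j l c r =
          ball (c.2 + inner ℝ (J c.1) x) (r ^ 2 / 2 ^ (j + l)) := by
        ext y; simp [mem_iff, hx]
      rw [this, Real.volume_ball, Set.indicator_of_mem hx]
    · have : Prod.mk x ⁻¹' aniBall d J j l c r = ∅ := by
        ext y; simp [mem_iff, hx]
      rw [this, measure_empty, Set.indicator_of_notMem hx]
  rw [Measure.volume_eq_prod, Measure.prod_apply (isOpen c r).measurableSet]
  simp_rw [hfiber]
  rw [lintegral_indicator_const measurableSet_ball]

theorem volume_mul_radius (c : EuclideanSpace ℝ (Fin d) × ℝ) (r : ℝ) {t : ℝ} (ht : 0 < t) :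
    volume (aniBall d J j l c (t * r)) =
      ENNReal.ofReal (t ^ (d + 2)) * volume (aniBall d J j l c r) := by
  rw [volume_eq, volume_eq, mul_div_assoc, Measure.addHaar_ball_mul_of_pos _ _ ht,
    finrank_euclideanSpace_fin, Measure.addHaar_ball_center volume c.1,
    show 2 * ((t * r) ^ 2 / 2 ^ (j + l)) = t ^ 2 * (2 * (r ^ 2 / 2 ^ (j + l))) by ring,
    pow_add t d 2, ENNReal.ofReal_mul (by positivity : 0 ≤ t ^ 2),
    ENNReal.ofReal_mul (by positivity : 0 ≤ t ^ d)]
  ring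

theorem subset_three_mul_of_le_of_inter_nonempty (hJ : ‖J‖ ≤ 1)
    {a b : EuclideanSpace ℝ (Fin d) × ℝ} {s r : ℝ} (hsr : s ≤ r)
    (hne : (aniBall d J j l a s ∩ aniBall d J j l b r).Nonempty) :
    aniBall d J j l a s ⊆ aniBall d J j l b (3 * r) := by
  obtain ⟨z, ⟨hza₁, hza₂⟩, hzb₁, hzb₂⟩ := hne
  rintro x ⟨hxa₁, hxa₂⟩
  have hH : (1 : ℝ) ≤ 2 ^ (j + l) := one_le_pow₀ one_le_two
  simp only [aniBall, Set.mem_ofPred_eq]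
  set H : ℝ := 2 ^ (j + l)
  clear_value H
  have hs : 0 ≤ s :=
    ((div_pos_iff_of_pos_right (by positivity)).1 ((norm_nonneg _).trans_lt hza₁)).le
  have hsrH : s / H ≤ r / H := by gcongr
  have hba : ‖b.1 - a.1‖ ≤ 2 * (r / H) := by
    have := norm_sub_le_norm_sub_add_norm_sub b.1 z.1 a.1
    rw [norm_sub_rev z.1 a.1] at this
    linarith
  have hxz : ‖x.1 - z.1‖ ≤ 2 * (r / H) := by
    have := norm_sub_le_norm_sub_add_norm_sub x.1 a.1 z.1
    rw [norm_sub_rev x.1 a.1] at this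
    linarith
  refine ⟨?_, ?_⟩
  · have := norm_sub_le_norm_sub_add_norm_sub b.1 a.1 x.1
    rw [mul_div_assoc]
    linarith
  · have hcross : |inner ℝ (J (b.1 - a.1)) (x.1 - z.1)| ≤ 4 * (r ^ 2 / H) :=
      calc |inner ℝ (J (b.1 - a.1)) (x.1 - z.1)| ≤ ‖J (b.1 - a.1)‖ * ‖x.1 - z.1‖ :=
            abs_real_inner_le_norm _ _
        _ ≤ ‖b.1 - a.1‖ * ‖x.1 - z.1‖ := by
            gcongr; exact (J.le_of_opNorm_le hJ _).trans_eq (one_mul _)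
        _ ≤ 2 * (r / H) * (2 * (r / H)) := by gcongr; exact (norm_nonneg _).trans hba
        _ = 4 * (r ^ 2 / H) / H := by ring
        _ ≤ 4 * (r ^ 2 / H) := div_le_self (by positivity) hH
    have hsr2 : s ^ 2 / H ≤ r ^ 2 / H := by gcongr
    obtain ⟨hza₂', hza₂''⟩ := abs_lt.1 hza₂
    obtain ⟨hzb₂', hzb₂''⟩ := abs_lt.1 hzb₂
    obtain ⟨hxa₂', hxa₂''⟩ := abs_lt.1 hxa₂
    obtain ⟨hcross', hcross''⟩ := abs_le.1 hcross
    have hr2 : 0 ≤ r ^ 2 / H := by positivity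
    rw [sub_add_inner_split J a b x z, abs_lt, mul_pow, mul_div_assoc]
    constructor <;> linarith

end aniBall

theorem stmt2_general (d : ℕ)
    (J : EuclideanSpace ℝ (Fin d) →L[ℝ] EuclideanSpace ℝ (Fin d)) (hJ : ‖J‖ ≤ 1)
    (j l : ℕ) (S : Set (EuclideanSpace ℝ (Fin d) × ℝ))
    (n : ℕ) (c : Fin n → EuclideanSpace ℝ (Fin d) × ℝ) (r : Fin n → ℝ)
    (hr : ∀ i, 0 < r i) (hcov : S ⊆ ⋃ i, aniBall d J j l (c i) (r i)) :
    ∃ t : Finset (Fin n),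
      ((t : Set (Fin n)).Pairwise fun i i' =>
        Disjoint (aniBall d J j l (c i) (r i)) (aniBall d J j l (c i') (r i'))) ∧
      ((3 : ℝ≥0∞) ^ (d + 2))⁻¹ * volume S ≤ ∑ i ∈ t, volume (aniBall d J j l (c i) (r i)) := by
  obtain ⟨t, hdisj, hcover⟩ := exists_pairwiseDisjoint_subfamily_of_engulfing
    (fun i => aniBall d J j l (c i) (r i)) (fun i => aniBall d J j l (c i) (3 * r i)) r
    (fun i => (hr i).le) (fun i => aniBall.nonempty (c i) (hr i))
    (fun _ _ hab => aniBall.subset_three_mul_of_le_of_inter_nonempty hJ hab)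
  refine ⟨t, hdisj, (ENNReal.inv_mul_le_iff (by positivity) (by finiteness)).2 ?_⟩
  calc volume S ≤ volume (⋃ i ∈ t, aniBall d J j l (c i) (3 * r i)) :=
        measure_mono (hcov.trans hcover)
    _ ≤ ∑ i ∈ t, volume (aniBall d J j l (c i) (3 * r i)) := measure_biUnion_finset_le _ _
    _ = (3 : ℝ≥0∞) ^ (d + 2) * ∑ i ∈ t, volume (aniBall d J j l (c i) (r i)) := by
        simp_rw [Finset.mul_sum, aniBall.volume_mul_radius _ _ three_pos,
          ENNReal.ofReal_pow zero_le_three, ENNReal.ofReal_ofNat]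

theorem stmt2 (d : ℕ) (hd : 1 ≤ d)
    (J : EuclideanSpace ℝ (Fin d) →L[ℝ] EuclideanSpace ℝ (Fin d)) (hJ : ‖J‖ ≤ 1)
    (j l : ℕ) (S : Set (EuclideanSpace ℝ (Fin d) × ℝ)) (hS : MeasurableSet S)
    (n : ℕ) (c : Fin n → EuclideanSpace ℝ (Fin d) × ℝ) (r : Fin n → ℝ)
    (hr : ∀ i, 0 < r i) (hcov : S ⊆ ⋃ i, aniBall d J j l (c i) (r i)) :
    ∃ t : Finset (Fin n),
      ((t : Set (Fin n)).Pairwise fun i i' =>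
        Disjoint (aniBall d J j l (c i) (r i)) (aniBall d J j l (c i') (r i'))) ∧
      ((3 : ℝ≥0∞) ^ (d + 2))⁻¹ * volume S ≤ ∑ i ∈ t, volume (aniBall d J j l (c i) (r i)) :=
  stmt2_general d J hJ j l S n c r hr hcov
end

section
/- Let {T_k}_{k∈ℤ} be a family of bounded operators from L²(M₁) to L²(M₂) (measure spaces M₁, M₂). Suppose ‖T_{k₁} T_{k₂}^*‖_{op} ≤ C(|k₁ - k₂|) for all k₁, k₂, where ∑_{k∈ℤ} √(C(|k|)) < ∞. Then for all f ∈ L²(M₁), ‖(∑_{k∈ℤ} |T_k f|²)^{1/2}‖_{L²(M₂)} ≤ C' (sup_k ‖T_k‖_{op} · ∑_{k∈ℤ} √(C(|k|)))^{1/2} ‖f‖_{L²(M₁)} for an absolute constant C'. -/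
/-!
Put `g = ∑ₐ Tₐ* Tₐ f`, so that `∑ₐ ‖Tₐ f‖² = re ⟪g, f⟫ ≤ ‖g‖ ‖f‖`. Expanding `‖g‖²` gives
cross terms `⟪T_b Tₐ* Tₐ f, T_b f⟫`, bounded by `‖T_b Tₐ*‖ ‖Tₐ f‖ ‖T_b f‖`, and
`‖T_b Tₐ*‖ ≤ min (C |a - b|) (sup ‖T‖)² ≤ √(C |a - b|) · sup ‖T‖`. Schur's test for the
kernel `√(C |a - b|)` then yields `‖g‖² ≤ sup ‖T‖ · ∑ √C · ∑ₐ ‖Tₐ f‖²`, and the two inequalities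
combine to the claim with `C' = 1`.
-/

open MeasureTheory ContinuousLinearMap
open scoped ENNReal InnerProductSpace InnerProduct

theorem Finset.sum_sum_mul_mul_le_of_sum_le {ι : Type*} (K : ι → ι → ℝ) (hK0 : ∀ a b, 0 ≤ K a b)
    (hK : ∀ a b, K a b = K b a) (s : Finset ι) {S : ℝ} (hS : ∀ a ∈ s, ∑ b ∈ s, K a b ≤ S)
    (x : ι → ℝ) :
    ∑ a ∈ s, ∑ b ∈ s, K a b * (x a * x b) ≤ S * ∑ a ∈ s, x a ^ 2 := by
  calc ∑ a ∈ s, ∑ b ∈ s, K a b * (x a * x b)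
      ≤ ∑ a ∈ s, ∑ b ∈ s, (K a b * x a ^ 2 + K b a * x b ^ 2) / 2 := by
        gcongr with a _ b _
        rw [hK b a]
        nlinarith [hK0 a b, mul_nonneg (hK0 a b) (sq_nonneg (x a - x b))]
    _ = ∑ a ∈ s, (∑ b ∈ s, K a b) * x a ^ 2 := by
        simp only [← Finset.sum_div, Finset.sum_add_distrib, Finset.sum_mul]
        rw [Finset.sum_comm (f := fun a b => K b a * x b ^ 2)]
        ring
    _ ≤ ∑ a ∈ s, S * x a ^ 2 := by
        gcongr with a ha
        exact hS a ha
    _ = S * ∑ a ∈ s, x a ^ 2 := by rw [Finset.mul_sum]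

theorem Finset.sum_comp_sub_le_tsum {G : Type*} [AddGroup G] {w : G → ℝ} (hw0 : 0 ≤ w)
    (hw : Summable w) (a : G) (s : Finset G) :
    ∑ b ∈ s, w (b - a) ≤ ∑' k, w k := by
  rw [← (Equiv.subRight a).tsum_eq w]
  exact ((Equiv.subRight a).summable_iff.mpr hw).sum_le_tsum s fun b _ => hw0 _

theorem Real.le_sqrt_mul_of_le_of_le {x a b : ℝ} (hx : 0 ≤ x) (ha : x ≤ a) (hb : x ≤ b) :
    x ≤ √(a * b) := by
  rw [Real.le_sqrt hx (mul_nonneg (hx.trans ha) (hx.trans hb)), sq]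
  exact mul_le_mul ha hb hx (hx.trans ha)

theorem MeasureTheory.Lp.lintegral_enorm_sq {α E : Type*} [MeasurableSpace α] {μ : Measure α}
    [NormedAddCommGroup E] (g : Lp E 2 μ) :
    ∫⁻ y, ‖g y‖ₑ ^ 2 ∂μ = ENNReal.ofReal (‖g‖ ^ 2) := by
  have h := eLpNorm_nnreal_pow_eq_lintegral (f := (g : α → E)) (μ := μ) (p := 2) two_ne_zero
  simp only [NNReal.coe_ofNat, ENNReal.coe_ofNat, ENNReal.rpow_two] at h
  rw [← h, ENNReal.ofReal_pow (norm_nonneg g), ofReal_norm, Lp.enorm_def]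

namespace ContinuousLinearMap

variable {𝕜 E F : Type*} [RCLike 𝕜] [NormedAddCommGroup E] [InnerProductSpace 𝕜 E] [CompleteSpace E]
  [NormedAddCommGroup F] [InnerProductSpace 𝕜 F] [CompleteSpace F]

theorem norm_le_sqrt_of_norm_comp_adjoint_le (A : E →L[𝕜] F) {c : ℝ} (h : ‖A ∘L A†‖ ≤ c) :
    ‖A‖ ≤ √c := by
  have hAA : ‖A ∘L A†‖ = ‖A‖ ^ 2 := by
    simpa only [adjoint_adjoint, LinearIsometryEquiv.norm_map, sq] using
      norm_adjoint_comp_self (A†)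
  rw [Real.le_sqrt (norm_nonneg A) ((norm_nonneg _).trans h), ← hAA]
  exact h

theorem norm_comp_adjoint_le_sqrt_mul (A B : E →L[𝕜] F) {c M : ℝ} (h : ‖A ∘L B†‖ ≤ c)
    (hA : ‖A‖ ≤ M) (hB : ‖B‖ ≤ M) : ‖A ∘L B†‖ ≤ √c * M := by
  have hM : ‖A ∘L B†‖ ≤ M * M :=
    calc ‖A ∘L B†‖ ≤ ‖A‖ * ‖B†‖ := opNorm_comp_le _ _
      _ = ‖A‖ * ‖B‖ := by rw [LinearIsometryEquiv.norm_map]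
      _ ≤ M * M := mul_le_mul hA hB (norm_nonneg _) ((norm_nonneg _).trans hA)
  have h' := Real.le_sqrt_mul_of_le_of_le (norm_nonneg _) h hM
  rwa [Real.sqrt_mul ((norm_nonneg _).trans h), Real.sqrt_mul_self ((norm_nonneg _).trans hA)] at h'

theorem re_inner_adjoint_apply_le (A B : E →L[𝕜] F) (f : E) :
    RCLike.re ⟪(A†) (A f), (B†) (B f)⟫_𝕜 ≤ ‖B ∘L A†‖ * (‖A f‖ * ‖B f‖) := by
  rw [adjoint_inner_right, ← mul_assoc]
  calc RCLike.re ⟪B ((A†) (A f)), B f⟫_𝕜 ≤ ‖(B ∘L A†) (A f)‖ * ‖B f‖ := re_inner_le_norm _ _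
    _ ≤ ‖B ∘L A†‖ * ‖A f‖ * ‖B f‖ := by gcongr; exact le_opNorm _ _

variable {ι : Type*}

theorem sum_norm_apply_sq_le_of_norm_comp_adjoint_le (T : ι → E →L[𝕜] F) (K : ι → ι → ℝ)
    (hK : ∀ a b, K a b = K b a) (hTK : ∀ a b, ‖T b ∘L (T a)†‖ ≤ K a b) (s : Finset ι) {S : ℝ}
    (hS0 : 0 ≤ S) (hS : ∀ a ∈ s, ∑ b ∈ s, K a b ≤ S) (f : E) :
    ∑ a ∈ s, ‖T a f‖ ^ 2 ≤ S * ‖f‖ ^ 2 := by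
  set g := ∑ a ∈ s, ((T a)†) (T a f)
  set σ := ∑ a ∈ s, ‖T a f‖ ^ 2
  have hσ0 : 0 ≤ σ := Finset.sum_nonneg fun a _ => sq_nonneg _
  have hσg : σ ≤ ‖g‖ * ‖f‖ := by
    have hσ : σ = RCLike.re ⟪g, f⟫_𝕜 := by
      simp only [σ, g, sum_inner, map_sum, adjoint_inner_left, inner_self_eq_norm_sq]
    exact hσ ▸ re_inner_le_norm g f
  have hgσ : ‖g‖ ^ 2 ≤ S * σ :=
    calc ‖g‖ ^ 2 = ∑ a ∈ s, ∑ b ∈ s, RCLike.re ⟪((T a)†) (T a f), ((T b)†) (T b f)⟫_𝕜 := by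
          simp only [← inner_self_eq_norm_sq (𝕜 := 𝕜), g, sum_inner, inner_sum, map_sum]
          exact Finset.sum_comm
      _ ≤ ∑ a ∈ s, ∑ b ∈ s, K a b * (‖T a f‖ * ‖T b f‖) := by
          gcongr with a _ b _
          exact (re_inner_adjoint_apply_le _ _ f).trans
            (mul_le_mul_of_nonneg_right (hTK a b) (by positivity))
      _ ≤ S * σ := Finset.sum_sum_mul_mul_le_of_sum_le K
          (fun a b => (norm_nonneg _).trans (hTK a b)) hK s hS _
  rcases hσ0.eq_or_lt with hσ | hσ
  · rw [← hσ]
    positivity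
  · have : σ * σ ≤ (S * ‖f‖ ^ 2) * σ :=
      calc σ * σ ≤ (‖g‖ * ‖f‖) * (‖g‖ * ‖f‖) := mul_le_mul hσg hσg hσ0 (by positivity)
        _ = ‖g‖ ^ 2 * ‖f‖ ^ 2 := by ring
        _ ≤ (S * σ) * ‖f‖ ^ 2 := by gcongr
        _ = (S * ‖f‖ ^ 2) * σ := by ring
    exact le_of_mul_le_mul_right this hσ

theorem tsum_ofReal_norm_apply_sq_le_of_norm_comp_adjoint_le (T : ι → E →L[𝕜] F)
    (K : ι → ι → ℝ) (hK : ∀ a b, K a b = K b a) (hTK : ∀ a b, ‖T b ∘L (T a)†‖ ≤ K a b) {S : ℝ}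
    (hS0 : 0 ≤ S) (hS : ∀ a (s : Finset ι), ∑ b ∈ s, K a b ≤ S) (f : E) :
    ∑' a, ENNReal.ofReal (‖T a f‖ ^ 2) ≤ ENNReal.ofReal (S * ‖f‖ ^ 2) :=
  ENNReal.summable.tsum_le_of_sum_le fun s => by
    rw [← ENNReal.ofReal_sum_of_nonneg fun a _ => sq_nonneg _]
    exact ENNReal.ofReal_le_ofReal
      (sum_norm_apply_sq_le_of_norm_comp_adjoint_le T K hK hTK s hS0 (fun a _ => hS a s) f)

end ContinuousLinearMap

/-- Square-function variant of the Cotlar–Stein almost orthogonality lemma. -/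
theorem stmt9 :
    ∃ C' : ℝ, 0 < C' ∧
      ∀ (α β : Type) (_ : MeasurableSpace α) (_ : MeasurableSpace β)
        (μ : Measure α) (ν : Measure β)
        (T : ℤ → (Lp ℂ 2 μ →L[ℂ] Lp ℂ 2 ν)) (C : ℕ → ℝ), (∀ n, 0 ≤ C n) →
        (∀ k₁ k₂ : ℤ,
          ‖(T k₁).comp (ContinuousLinearMap.adjoint (T k₂))‖ ≤ C (k₁ - k₂).natAbs) →
        Summable (fun k : ℤ => Real.sqrt (C k.natAbs)) →
        ∀ f : Lp ℂ 2 μ,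
          ∫⁻ y, ∑' k : ℤ, (‖(T k f : β → ℂ) y‖₊ : ℝ≥0∞) ^ 2 ∂ν ≤
            ENNReal.ofReal (C' ^ 2 * (⨆ k : ℤ, ‖T k‖) * ∑' k : ℤ, Real.sqrt (C k.natAbs)) *
              ENNReal.ofReal (‖f‖ ^ 2) := by
  refine ⟨1, one_pos, fun α β _ _ μ ν T C _ hTT hS f => ?_⟩
  set M := ⨆ k : ℤ, ‖T k‖
  set S := ∑' k : ℤ, √(C k.natAbs)
  have hTM : ∀ k, ‖T k‖ ≤ M := le_ciSup ⟨√(C 0), by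
    rintro _ ⟨k, rfl⟩
    exact norm_le_sqrt_of_norm_comp_adjoint_le _ (by simpa using hTT k k)⟩
  have hM0 : 0 ≤ M := (norm_nonneg _).trans (hTM 0)
  have hS0 : 0 ≤ S := tsum_nonneg fun k => Real.sqrt_nonneg _
  have hTK : ∀ a b, ‖T b ∘L (T a)†‖ ≤ √(C (b - a).natAbs) * M := fun a b =>
    norm_comp_adjoint_le_sqrt_mul _ _ (hTT b a) (hTM b) (hTM a)
  have hK : ∀ a b : ℤ, √(C (b - a).natAbs) * M = √(C (a - b).natAbs) * M := fun a b => by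
    rw [← Int.natAbs_neg, neg_sub]
  have hrow : ∀ a (s : Finset ℤ), ∑ b ∈ s, √(C (b - a).natAbs) * M ≤ S * M := fun a s => by
    rw [← Finset.sum_mul]
    exact mul_le_mul_of_nonneg_right
      (Finset.sum_comp_sub_le_tsum (fun k => Real.sqrt_nonneg _) hS a s) hM0
  calc ∫⁻ y, ∑' k : ℤ, (‖(T k f : β → ℂ) y‖₊ : ℝ≥0∞) ^ 2 ∂ν
      = ∑' k, ENNReal.ofReal (‖T k f‖ ^ 2) := by
        simp only [← enorm_eq_nnnorm]
        rw [lintegral_tsum fun k => (Lp.aestronglyMeasurable _).enorm.pow_const 2]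
        simp only [Lp.lintegral_enorm_sq]
    _ ≤ ENNReal.ofReal (S * M * ‖f‖ ^ 2) :=
        tsum_ofReal_norm_apply_sq_le_of_norm_comp_adjoint_le T _ hK hTK (mul_nonneg hS0 hM0) hrow f
    _ = _ := by rw [one_pow, one_mul, mul_comm S M, ← ENNReal.ofReal_mul (mul_nonneg hM0 hS0)]
end
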